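/- arXiv:2208.10193 — 2 statements merged into one kernel-verified Lean document; each statement's English description precedes it below -/
import Mathlib

section
/- Let φ : ℝᵐ → ℝˡ be twice continuously differentiable with L-Lipschitz Hessian. Then for every x ∈ ℝᵐ, every unit vector v ∈ ℝᵐ and every r > 0, the second-order midpoint difference quotient satisfies |8·((φ(x) + φ(x+rv))/2 − φ(x + (r/2)v))/r² − D²φ(x)[v,v]| ≤ (5/6)·L·r. -/
/-- If `φ : ℝᵐ → ℝˡ` is C² with `L`-Lipschitz Hessian, then for every `x`,
unit vector `v` and `r > 0`, the second-order midpoint difference quotient satisfies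
`|8·((φ(x)+φ(x+rv))/2 − φ(x+(r/2)v))/r² − D²φ(x)[v,v]| ≤ (5/6)·L·r`. -/
theorem stmt3 (m l : ℕ)
    (φ : EuclideanSpace ℝ (Fin m) → EuclideanSpace ℝ (Fin l))
    (hφ : ContDiff ℝ 2 φ) (L : ℝ)
    (hLip : ∀ x y, ‖fderiv ℝ (fderiv ℝ φ) x - fderiv ℝ (fderiv ℝ φ) y‖ ≤ L * ‖x - y‖)
    (x v : EuclideanSpace ℝ (Fin m)) (hv : ‖v‖ = 1) (r : ℝ) (hr : 0 < r) :
    ‖(8 / r ^ 2) • ((1 / 2 : ℝ) • (φ x + φ (x + r • v)) - φ (x + (r / 2) • v))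
        - fderiv ℝ (fderiv ℝ φ) x v v‖ ≤ (5 / 6) * L * r := by
  have hL : 0 ≤ L := by
    have h := hLip x (x + v)
    have : ‖x - (x + v)‖ = 1 := by
      rw [show x - (x + v) = -v by abel, norm_neg, hv]
    rw [this, mul_one] at h
    exact le_trans (ContinuousLinearMap.opNorm_nonneg _) h
  set c : ℝ → EuclideanSpace ℝ (Fin m) := fun t => x + t • v with hc_def
  have hc : ∀ t : ℝ, HasDerivAt c v t := fun t => by
    simpa [hc_def] using ((hasDerivAt_id t).smul_const v).const_add x
  have hc0 : c 0 = x := by simp [hc_def]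
  set f : ℝ → EuclideanSpace ℝ (Fin l) := fun t => φ (c t) with hf_def
  set D1 : ℝ → EuclideanSpace ℝ (Fin l) := fun t => fderiv ℝ φ (c t) v with hD1_def
  set D2 : ℝ → EuclideanSpace ℝ (Fin l) := fun t => fderiv ℝ (fderiv ℝ φ) (c t) v v
    with hD2_def
  have hφd : Differentiable ℝ φ := hφ.differentiable (by norm_num)
  have hφ1 : ContDiff ℝ 1 (fderiv ℝ φ) := hφ.fderiv_right (by norm_num)
  have hφ'd : Differentiable ℝ (fderiv ℝ φ) := hφ1.differentiable one_ne_zero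
  have hf : ∀ t : ℝ, HasDerivAt f (D1 t) t := fun t =>
    ((hφd (c t)).hasFDerivAt).comp_hasDerivAt t (hc t)
  have hD1 : ∀ t : ℝ, HasDerivAt D1 (D2 t) t := fun t => by
    have h1 : HasDerivAt (fun t => fderiv ℝ φ (c t))
        (fderiv ℝ (fderiv ℝ φ) (c t) v) t :=
      ((hφ'd (c t)).hasFDerivAt).comp_hasDerivAt t (hc t)
    simpa using h1.clm_apply (hasDerivAt_const t v)
  -- Lipschitz bound on D2 along the curve
  have hD2lip : ∀ s : ℝ, 0 ≤ s → ‖D2 s - D2 0‖ ≤ L * s := by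
    intro s hs
    have h1 : D2 s - D2 0
        = ((fderiv ℝ (fderiv ℝ φ) (c s) - fderiv ℝ (fderiv ℝ φ) (c 0)) v) v := by
      simp [hD2_def]
    rw [h1]
    set A := fderiv ℝ (fderiv ℝ φ) (c s) - fderiv ℝ (fderiv ℝ φ) (c 0) with hA
    have h2 : ‖(A v) v‖ ≤ ‖A‖ := by
      calc ‖(A v) v‖ ≤ ‖A v‖ * ‖v‖ := (A v).le_opNorm v
        _ ≤ ‖A‖ * ‖v‖ * ‖v‖ := by
            exact mul_le_mul_of_nonneg_right (A.le_opNorm v) (norm_nonneg v)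
        _ = ‖A‖ := by rw [hv]; ring
    have h3 : ‖A‖ ≤ L * s := by
      have := hLip (c s) (c 0)
      have hcs : ‖c s - c 0‖ = s := by
        simp [hc_def, norm_smul, abs_of_nonneg hs, hv]
      rwa [hcs] at this
    exact h2.trans h3
  -- first Taylor bound
  set g1 : ℝ → EuclideanSpace ℝ (Fin l) := fun t => D1 t - D1 0 - t • D2 0 with hg1_def
  have hg1' : ∀ t : ℝ, HasDerivAt g1 (D2 t - D2 0) t := fun t => by
    have := ((hD1 t).sub_const (D1 0)).sub ((hasDerivAt_id t).smul_const (D2 0))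
    simp at this; exact this
  have hg1bound : ∀ t ∈ Set.Icc (0:ℝ) r, ‖g1 t‖ ≤ L / 2 * t ^ 2 := by
    intro t ht
    have := image_norm_le_of_norm_deriv_right_le_deriv_boundary
      (f := g1) (f' := fun t => D2 t - D2 0) (a := 0) (b := r)
      (B := fun t => L / 2 * t ^ 2) (B' := fun t => L * t)
      (fun s _ => ((hg1' s).continuousAt).continuousWithinAt)
      (fun s _ => (hg1' s).hasDerivWithinAt)
      (by simp [hg1_def])
      (fun s => by
        have := (hasDerivAt_pow 2 s).const_mul (L / 2)
        exact this.congr_deriv (by push_cast; ring))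
      (fun s hs => hD2lip s hs.1)
    exact this ht
  -- second Taylor bound
  set g2 : ℝ → EuclideanSpace ℝ (Fin l) :=
    fun t => f t - f 0 - t • D1 0 - (t ^ 2 / 2) • D2 0 with hg2_def
  have hg2' : ∀ t : ℝ, HasDerivAt g2 (g1 t) t := fun t => by
    have hsq : HasDerivAt (fun t : ℝ => (t ^ 2 / 2) • D2 0) (t • D2 0) t := by
      have := ((hasDerivAt_pow 2 t).div_const 2).smul_const (D2 0)
      rw [show ((2 : ℕ) : ℝ) * t ^ (2 - 1) / 2 = t by norm_num] at this
      exact this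
    have := (((hf t).sub_const (f 0)).sub ((hasDerivAt_id t).smul_const (D1 0))).sub hsq
    simp [hg1_def] at this; exact this
  have hg2bound : ∀ t ∈ Set.Icc (0:ℝ) r, ‖g2 t‖ ≤ L / 6 * t ^ 3 := by
    intro t ht
    have := image_norm_le_of_norm_deriv_right_le_deriv_boundary
      (f := g2) (f' := g1) (a := 0) (b := r)
      (B := fun t => L / 6 * t ^ 3) (B' := fun t => L / 2 * t ^ 2)
      (fun s _ => ((hg2' s).continuousAt).continuousWithinAt)
      (fun s _ => (hg2' s).hasDerivWithinAt)
      (by simp [hg2_def])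
      (fun s => by
        have := (hasDerivAt_pow 3 s).const_mul (L / 6)
        exact this.congr_deriv (by push_cast; ring))
      (fun s hs => hg1bound s ⟨hs.1, le_of_lt hs.2⟩)
    exact this ht
  have hb1 : ‖g2 r‖ ≤ L / 6 * r ^ 3 := hg2bound r ⟨le_of_lt hr, le_refl r⟩
  have hb2 : ‖g2 (r / 2)‖ ≤ L / 6 * (r / 2) ^ 3 :=
    hg2bound (r / 2) ⟨by positivity, by linarith⟩
  -- algebraic identity
  have hr2 : (8 / r ^ 2) * (r ^ 2 / 8) = 1 := by
    field_simp
  have hfx : φ x = f 0 := by rw [hf_def]; simp [hc0]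
  have hfr : φ (x + r • v) = f r := rfl
  have hfr2 : φ (x + (r / 2) • v) = f (r / 2) := rfl
  have hD20 : fderiv ℝ (fderiv ℝ φ) x v v = D2 0 := by simp only [hD2_def, hc0]
  have key : (1 / 2 : ℝ) • (f 0 + f r) - f (r / 2)
      = ((1 / 2 : ℝ) • g2 r - g2 (r / 2)) + (r ^ 2 / 8) • D2 0 := by
    simp only [hg2_def]
    module
  rw [hfx, hfr, hfr2, hD20, key, smul_add, smul_smul, hr2, one_smul,
    add_sub_cancel_right]
  have hnorm : ‖(8 / r ^ 2) • ((1 / 2 : ℝ) • g2 r - g2 (r / 2))‖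
      = (8 / r ^ 2) * ‖(1 / 2 : ℝ) • g2 r - g2 (r / 2)‖ := by
    rw [norm_smul, Real.norm_eq_abs, abs_of_pos (by positivity)]
  rw [hnorm]
  have htri : ‖(1 / 2 : ℝ) • g2 r - g2 (r / 2)‖
      ≤ (1 / 2) * ‖g2 r‖ + ‖g2 (r / 2)‖ := by
    calc ‖(1 / 2 : ℝ) • g2 r - g2 (r / 2)‖
        ≤ ‖(1 / 2 : ℝ) • g2 r‖ + ‖g2 (r / 2)‖ := norm_sub_le _ _
      _ = (1 / 2) * ‖g2 r‖ + ‖g2 (r / 2)‖ := by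
          rw [norm_smul, Real.norm_eq_abs]; norm_num
  have hfinal : (8 / r ^ 2) * ((1 / 2) * (L / 6 * r ^ 3) + L / 6 * (r / 2) ^ 3)
      = 5 / 6 * L * r := by
    field_simp
    ring
  calc (8 / r ^ 2) * ‖(1 / 2 : ℝ) • g2 r - g2 (r / 2)‖
      ≤ (8 / r ^ 2) * ((1 / 2) * (L / 6 * r ^ 3) + L / 6 * (r / 2) ^ 3) := by
        apply mul_le_mul_of_nonneg_left _ (by positivity)
        exact htri.trans (by linarith)
    _ = 5 / 6 * L * r := hfinal
end

section
/- Let (fₖ) be a sequence in L²(Ω,ℝˡ) with fₖ ⇀ f weakly in L², and let (gₖ) be measurable functions on Ω satisfying 0 < c ≤ gₖ ≤ C pointwise and gₖ → g pointwise almost everywhere. Then fₖ·√gₖ ⇀ f·√g weakly in L²(Ω,ℝˡ), and consequently liminf_{k→∞} ∫_Ω |fₖ|² gₖ dx ≥ ∫_Ω |f|² g dx. -/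
open MeasureTheory RealInnerProductSpace Filter

section helpers
variable {Ω : Type*} [MeasurableSpace Ω] {μ : Measure Ω}
variable {E : Type*} [NormedAddCommGroup E] [InnerProductSpace ℝ E]

lemma stmt11_integrable_inner {u v : Ω → E} (hu : MemLp u 2 μ) (hv : MemLp v 2 μ) :
    Integrable (fun x => ⟪u x, v x⟫) μ := by
  have h := L2.integrable_inner (𝕜 := ℝ) (hu.toLp u) (hv.toLp v)
  refine h.congr ?_
  filter_upwards [hu.coeFn_toLp, hv.coeFn_toLp] with x h1 h2
  rw [h1, h2]

lemma stmt11_integral_inner {u v : Ω → E} (hu : MemLp u 2 μ) (hv : MemLp v 2 μ) :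
    ∫ x, ⟪u x, v x⟫ ∂μ = ⟪hu.toLp u, hv.toLp v⟫ := by
  rw [L2.inner_def]
  refine (integral_congr_ae ?_).symm
  filter_upwards [hu.coeFn_toLp, hv.coeFn_toLp] with x h1 h2
  rw [h1, h2]

lemma stmt11_norm_toLp_sq {u : Ω → E} (hu : MemLp u 2 μ) :
    ‖hu.toLp u‖ ^ 2 = ∫ x, ‖u x‖ ^ 2 ∂μ := by
  rw [← real_inner_self_eq_norm_sq, ← stmt11_integral_inner hu hu]
  exact integral_congr_ae (Eventually.of_forall fun x => (real_inner_self_eq_norm_sq _))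

lemma stmt11_memLp_smul {w : Ω → ℝ} {h : Ω → E} {M : ℝ}
    (hw : AEStronglyMeasurable w μ) (hM : ∀ᵐ x ∂μ, ‖w x‖ ≤ M)
    (hh : MemLp h 2 μ) : MemLp (fun x => w x • h x) 2 μ := by
  refine MemLp.of_le_mul (c := M) hh (hw.smul hh.aestronglyMeasurable) ?_
  filter_upwards [hM] with x hx
  rw [norm_smul]
  exact mul_le_mul_of_nonneg_right hx (norm_nonneg _)

end helpers

/-- If `fₖ ⇀ f` weakly in `L²(Ω,ℝˡ)` and `gₖ` are measurable weights with
`0 < c ≤ gₖ ≤ C` converging pointwise a.e. to `g`, then `fₖ·√gₖ ⇀ f·√g` weakly in `L²` and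
`liminf ∫ |fₖ|² gₖ ≥ ∫ |f|² g`. -/
theorem stmt11 (l : ℕ) {Ω : Type*} [MeasurableSpace Ω] (μ : Measure Ω) [IsFiniteMeasure μ]
    (f : ℕ → Ω → EuclideanSpace ℝ (Fin l)) (flim : Ω → EuclideanSpace ℝ (Fin l))
    (hf : ∀ k, MemLp (f k) 2 μ) (hflim : MemLp flim 2 μ)
    (hweak : ∀ h : Ω → EuclideanSpace ℝ (Fin l), MemLp h 2 μ →
      Tendsto (fun k => ∫ x, ⟪f k x, h x⟫ ∂μ) atTop (nhds (∫ x, ⟪flim x, h x⟫ ∂μ)))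
    (g : ℕ → Ω → ℝ) (glim : Ω → ℝ) (c C : ℝ) (hc : 0 < c)
    (hgmeas : ∀ k, Measurable (g k))
    (hgbdd : ∀ k x, c ≤ g k x ∧ g k x ≤ C)
    (hgconv : ∀ᵐ x ∂μ, Tendsto (fun k => g k x) atTop (nhds (glim x))) :
    (∀ h : Ω → EuclideanSpace ℝ (Fin l), MemLp h 2 μ →
      Tendsto (fun k => ∫ x, ⟪Real.sqrt (g k x) • f k x, h x⟫ ∂μ) atTop
        (nhds (∫ x, ⟪Real.sqrt (glim x) • flim x, h x⟫ ∂μ))) ∧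
    (∫ x, ‖flim x‖ ^ 2 * glim x ∂μ) ≤
      atTop.liminf (fun k => ∫ x, ‖f k x‖ ^ 2 * g k x ∂μ) := by
  set C' : ℝ := max C 0 with hC'def
  have hC'0 : 0 ≤ C' := le_max_right _ _
  have hgbdd' : ∀ k x, g k x ≤ C' := fun k x => (hgbdd k x).2.trans (le_max_left _ _)
  have hg0 : ∀ k x, 0 ≤ g k x := fun k x => hc.le.trans (hgbdd k x).1
  have hsqrt_bd : ∀ k x, ‖Real.sqrt (g k x)‖ ≤ Real.sqrt C' := by
    intro k x
    rw [Real.norm_eq_abs, abs_of_nonneg (Real.sqrt_nonneg _)]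
    exact Real.sqrt_le_sqrt (hgbdd' k x)
  have hglim_bd : ∀ᵐ x ∂μ, c ≤ glim x ∧ glim x ≤ C' := by
    filter_upwards [hgconv] with x hx
    exact ⟨ge_of_tendsto hx (Eventually.of_forall fun k => (hgbdd k x).1),
      le_of_tendsto hx (Eventually.of_forall fun k => hgbdd' k x)⟩
  have hglim_meas : AEMeasurable glim μ :=
    aemeasurable_of_tendsto_metrizable_ae _ (fun k => (hgmeas k).aemeasurable) hgconv
  have hsglim_meas : AEStronglyMeasurable (fun x => Real.sqrt (glim x)) μ :=
    (Real.continuous_sqrt.measurable.comp_aemeasurable hglim_meas).aestronglyMeasurable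
  have hsglim_bd : ∀ᵐ x ∂μ, ‖Real.sqrt (glim x)‖ ≤ Real.sqrt C' := by
    filter_upwards [hglim_bd] with x hx
    rw [Real.norm_eq_abs, abs_of_nonneg (Real.sqrt_nonneg _)]
    exact Real.sqrt_le_sqrt hx.2
  -- membership of weighted functions
  have hmemk : ∀ k, MemLp (fun x => Real.sqrt (g k x) • f k x) 2 μ := fun k =>
    stmt11_memLp_smul ((Real.continuous_sqrt.measurable.comp (hgmeas k)).aestronglyMeasurable)
      (Eventually.of_forall (hsqrt_bd k)) (hf k)
  have hmemlim : ∀ {h : Ω → EuclideanSpace ℝ (Fin l)}, MemLp h 2 μ →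
      MemLp (fun x => Real.sqrt (glim x) • h x) 2 μ := fun hh =>
    stmt11_memLp_smul hsglim_meas hsglim_bd hh
  -- a uniform bound on the L² norms of the `f k`, via Banach–Steinhaus
  obtain ⟨B, hB0, hB⟩ : ∃ B, 0 ≤ B ∧ ∀ k, ‖(hf k).toLp (f k)‖ ≤ B := by
    have hpt : ∀ h : Lp (EuclideanSpace ℝ (Fin l)) 2 μ,
        ∃ M, ∀ k, ‖(innerSL ℝ ((hf k).toLp (f k))) h‖ ≤ M := by
      intro h
      have ht : Tendsto (fun k => ⟪(hf k).toLp (f k), h⟫) atTop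
          (nhds (∫ x, ⟪flim x, h x⟫ ∂μ)) := by
        have h2 := hweak h (Lp.memLp h)
        refine h2.congr fun k => ?_
        rw [L2.inner_def]
        refine integral_congr_ae ?_
        filter_upwards [(hf k).coeFn_toLp] with x h1
        rw [h1]
      obtain ⟨M, hM⟩ := ht.norm.bddAbove_range
      exact ⟨M, fun k => hM (Set.mem_range_self k)⟩
    obtain ⟨B, hB⟩ := banach_steinhaus hpt
    refine ⟨max B 0, le_max_right _ _, fun k => ?_⟩
    rw [← innerSL_apply_norm ℝ]
    exact (hB k).trans (le_max_left _ _)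
  -- Part 1
  have part1 : ∀ h : Ω → EuclideanSpace ℝ (Fin l), MemLp h 2 μ →
      Tendsto (fun k => ∫ x, ⟪Real.sqrt (g k x) • f k x, h x⟫ ∂μ) atTop
        (nhds (∫ x, ⟪Real.sqrt (glim x) • flim x, h x⟫ ∂μ)) := by
    intro h hh
    have hsh : MemLp (fun x => Real.sqrt (glim x) • h x) 2 μ := hmemlim hh
    have hdk : ∀ k, MemLp (fun x => (Real.sqrt (g k x) - Real.sqrt (glim x)) • h x) 2 μ := by
      intro k
      refine stmt11_memLp_smul (M := Real.sqrt C' + Real.sqrt C')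
        (((Real.continuous_sqrt.measurable.comp (hgmeas k)).aemeasurable.sub
          (Real.continuous_sqrt.measurable.comp_aemeasurable hglim_meas)).aestronglyMeasurable)
        ?_ hh
      filter_upwards [hsglim_bd] with x hx
      rw [Real.norm_eq_abs]
      exact (abs_sub _ _).trans (add_le_add (hsqrt_bd k x) (by rwa [Real.norm_eq_abs] at hx))
    -- decomposition
    have hdecomp : ∀ k, ∫ x, ⟪Real.sqrt (g k x) • f k x, h x⟫ ∂μ
        = (∫ x, ⟪f k x, Real.sqrt (glim x) • h x⟫ ∂μ)
          + ∫ x, ⟪f k x, (Real.sqrt (g k x) - Real.sqrt (glim x)) • h x⟫ ∂μ := by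
      intro k
      rw [← integral_add (stmt11_integrable_inner (hf k) hsh)
        (stmt11_integrable_inner (hf k) (hdk k))]
      refine integral_congr_ae (Eventually.of_forall fun x => ?_)
      simp only [real_inner_smul_left, real_inner_smul_right, sub_smul, inner_sub_right]
      ring
    -- term A
    have hA := hweak _ hsh
    -- term B tends to zero
    have hInt_h2 : Integrable (fun x => ‖h x‖ ^ 2) μ :=
      (stmt11_integrable_inner hh hh).congr
        (Filter.Eventually.of_forall fun x => real_inner_self_eq_norm_sq _)
    have hφ : Tendsto
        (fun k => ∫ x, ‖(Real.sqrt (g k x) - Real.sqrt (glim x)) • h x‖ ^ 2 ∂μ)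
        atTop (nhds 0) := by
      have hdct := tendsto_integral_of_dominated_convergence
        (F := fun k x => ‖(Real.sqrt (g k x) - Real.sqrt (glim x)) • h x‖ ^ 2)
        (f := fun _ => (0 : ℝ)) (μ := μ)
        (fun x => (Real.sqrt C' + Real.sqrt C') ^ 2 * ‖h x‖ ^ 2)
        (fun k => (((hdk k).aestronglyMeasurable.norm.aemeasurable.pow_const 2).aestronglyMeasurable))
        (hInt_h2.const_mul _)
        ?_ ?_
      · simpa using hdct
      · intro k
        filter_upwards [hsglim_bd] with x hx
        rw [Real.norm_eq_abs, abs_of_nonneg (sq_nonneg _), norm_smul, mul_pow]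
        refine mul_le_mul_of_nonneg_right (pow_le_pow_left₀ (norm_nonneg _) ?_ 2) (sq_nonneg _)
        rw [Real.norm_eq_abs]
        exact (abs_sub _ _).trans (add_le_add (hsqrt_bd k x) (by rwa [Real.norm_eq_abs] at hx))
      · filter_upwards [hgconv] with x hx
        have h1 : Tendsto (fun k => Real.sqrt (g k x)) atTop (nhds (Real.sqrt (glim x))) :=
          (Real.continuous_sqrt.continuousAt.tendsto).comp hx
        have h2 : Tendsto (fun k => (Real.sqrt (g k x) - Real.sqrt (glim x)) • h x) atTop
            (nhds ((0:ℝ) • h x)) := by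
          refine Tendsto.smul ?_ tendsto_const_nhds
          have := h1.sub (tendsto_const_nhds (x := Real.sqrt (glim x)))
          simpa using this
        have h3 := (h2.norm.pow 2)
        simpa using h3
    have hD : Tendsto (fun k => ‖(hdk k).toLp _‖) atTop (nhds 0) := by
      have heq : ∀ k, ‖(hdk k).toLp _‖ =
          Real.sqrt (∫ x, ‖(Real.sqrt (g k x) - Real.sqrt (glim x)) • h x‖ ^ 2 ∂μ) := by
        intro k
        rw [← stmt11_norm_toLp_sq (hdk k), Real.sqrt_sq (norm_nonneg _)]
      have := (Real.continuous_sqrt.continuousAt.tendsto).comp hφ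
      simp only [Function.comp_def] at this
      rw [Real.sqrt_zero] at this
      exact (funext heq : _) ▸ this
    have hBterm : Tendsto
        (fun k => ∫ x, ⟪f k x, (Real.sqrt (g k x) - Real.sqrt (glim x)) • h x⟫ ∂μ)
        atTop (nhds 0) := by
      rw [tendsto_zero_iff_abs_tendsto_zero]
      refine squeeze_zero (g := fun k => B * ‖(hdk k).toLp _‖)
        (fun k => abs_nonneg _) (fun k => ?_) ?_
      · show |∫ x, ⟪f k x, (Real.sqrt (g k x) - Real.sqrt (glim x)) • h x⟫ ∂μ|
          ≤ B * ‖(hdk k).toLp _‖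
        rw [stmt11_integral_inner (hf k) (hdk k)]
        calc |⟪(hf k).toLp (f k), (hdk k).toLp _⟫|
            ≤ ‖(hf k).toLp (f k)‖ * ‖(hdk k).toLp _‖ := abs_real_inner_le_norm _ _
          _ ≤ B * ‖(hdk k).toLp _‖ :=
            mul_le_mul_of_nonneg_right (hB k) (norm_nonneg _)
      · simpa using hD.const_mul B
    have hsum := hA.add hBterm
    rw [add_zero] at hsum
    have hlimeq : ∫ x, ⟪Real.sqrt (glim x) • flim x, h x⟫ ∂μ
        = ∫ x, ⟪flim x, Real.sqrt (glim x) • h x⟫ ∂μ :=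
      integral_congr_ae (Eventually.of_forall fun x => by
        simp only [real_inner_smul_left, real_inner_smul_right])
    rw [hlimeq]
    exact hsum.congr fun k => (hdecomp k).symm
  refine ⟨part1, ?_⟩
  -- Part 2
  set L : ℝ := ∫ x, ‖flim x‖ ^ 2 * glim x ∂μ with hLdef
  have hmem0 : MemLp (fun x => Real.sqrt (glim x) • flim x) 2 μ := hmemlim hflim
  have hnormsq : ∀ᵐ x ∂μ, ‖Real.sqrt (glim x) • flim x‖ ^ 2 = ‖flim x‖ ^ 2 * glim x := by
    filter_upwards [hglim_bd] with x hx
    rw [norm_smul, mul_pow, Real.norm_eq_abs, sq_abs, Real.sq_sqrt (hc.le.trans hx.1)]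
    ring
  have htend := part1 _ hmem0
  have hL : ∫ x, ⟪Real.sqrt (glim x) • flim x, Real.sqrt (glim x) • flim x⟫ ∂μ = L := by
    refine integral_congr_ae ?_
    filter_upwards [hnormsq] with x hx
    rw [real_inner_self_eq_norm_sq, hx]
  rw [hL] at htend
  -- pointwise Young bound for each k
  have hIle : ∀ k, ∫ x, ⟪Real.sqrt (g k x) • f k x, Real.sqrt (glim x) • flim x⟫ ∂μ
      ≤ (∫ x, ‖f k x‖ ^ 2 * g k x ∂μ) / 2 + L / 2 := by
    intro k
    have i1 : Integrable (fun x => ‖Real.sqrt (g k x) • f k x‖ ^ 2) μ :=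
      (stmt11_integrable_inner (hmemk k) (hmemk k)).congr
        (Filter.Eventually.of_forall fun x => real_inner_self_eq_norm_sq _)
    have i2 : Integrable (fun x => ‖Real.sqrt (glim x) • flim x‖ ^ 2) μ :=
      (stmt11_integrable_inner hmem0 hmem0).congr
        (Filter.Eventually.of_forall fun x => real_inner_self_eq_norm_sq _)
    have hmono := integral_mono
      (g := fun x => ‖Real.sqrt (g k x) • f k x‖ ^ 2 / 2
        + ‖Real.sqrt (glim x) • flim x‖ ^ 2 / 2)
      (stmt11_integrable_inner (hmemk k) hmem0)
      ((i1.div_const 2).add (i2.div_const 2)) (fun x => by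
        have h1 := real_inner_le_norm (Real.sqrt (g k x) • f k x) (Real.sqrt (glim x) • flim x)
        have h2 := sq_nonneg (‖Real.sqrt (g k x) • f k x‖ - ‖Real.sqrt (glim x) • flim x‖)
        dsimp only
        nlinarith)
    have hsplit : ∫ x, (‖Real.sqrt (g k x) • f k x‖ ^ 2 / 2
        + ‖Real.sqrt (glim x) • flim x‖ ^ 2 / 2) ∂μ
        = (∫ x, ‖f k x‖ ^ 2 * g k x ∂μ) / 2 + L / 2 := by
      rw [integral_add (i1.div_const 2) (i2.div_const 2), integral_div, integral_div]
      congr 1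
      · congr 1
        refine integral_congr_ae (Eventually.of_forall fun x => ?_)
        show ‖Real.sqrt (g k x) • f k x‖ ^ 2 = ‖f k x‖ ^ 2 * g k x
        rw [norm_smul, mul_pow, Real.norm_eq_abs, sq_abs, Real.sq_sqrt (hg0 k x)]
        ring
      · congr 1
        exact integral_congr_ae hnormsq
    rw [hsplit] at hmono
    exact hmono
  -- uniform upper bound for coboundedness
  have hIub : ∀ k, ∫ x, ‖f k x‖ ^ 2 * g k x ∂μ ≤ C' * B ^ 2 := by
    intro k
    have iA : Integrable (fun x => ‖f k x‖ ^ 2) μ :=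
      (stmt11_integrable_inner (hf k) (hf k)).congr
        (Filter.Eventually.of_forall fun x => real_inner_self_eq_norm_sq _)
    have iI : Integrable (fun x => ‖f k x‖ ^ 2 * g k x) μ := by
      have := stmt11_integrable_inner (hmemk k) (hmemk k)
      refine this.congr (Eventually.of_forall fun x => ?_)
      show ⟪Real.sqrt (g k x) • f k x, Real.sqrt (g k x) • f k x⟫ = ‖f k x‖ ^ 2 * g k x
      rw [real_inner_self_eq_norm_sq, norm_smul, mul_pow, Real.norm_eq_abs, sq_abs,
        Real.sq_sqrt (hg0 k x)]
      ring
    have h1 : ∫ x, ‖f k x‖ ^ 2 * g k x ∂μ ≤ ∫ x, C' * ‖f k x‖ ^ 2 ∂μ := by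
      refine integral_mono iI (iA.const_mul _) fun x => ?_
      dsimp only
      calc ‖f k x‖ ^ 2 * g k x ≤ ‖f k x‖ ^ 2 * C' :=
            mul_le_mul_of_nonneg_left (hgbdd' k x) (sq_nonneg _)
        _ = C' * ‖f k x‖ ^ 2 := mul_comm _ _
    rw [integral_const_mul] at h1
    refine h1.trans ?_
    have h2 : ∫ x, ‖f k x‖ ^ 2 ∂μ ≤ B ^ 2 := by
      rw [← stmt11_norm_toLp_sq (hf k)]
      exact pow_le_pow_left₀ (norm_nonneg _) (hB k) 2
    exact mul_le_mul_of_nonneg_left h2 hC'0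
  have hcob : IsCoboundedUnder (· ≥ ·) atTop (fun k => ∫ x, ‖f k x‖ ^ 2 * g k x ∂μ) :=
    isCoboundedUnder_ge_of_le atTop hIub
  refine le_of_forall_sub_le fun ε hε => ?_
  refine le_liminf_of_le hcob ?_
  have hev : ∀ᶠ k in atTop,
      L - ε / 2 < ∫ x, ⟪Real.sqrt (g k x) • f k x, Real.sqrt (glim x) • flim x⟫ ∂μ :=
    htend.eventually (eventually_gt_nhds (by linarith))
  filter_upwards [hev] with k hk
  have := hIle k
  linarith
end
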